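/- Define, for κ ≥ 1, g₂(κ) := 1/κ³ + 5/κ⁵ + 11/κ⁶ + 5/κ⁷ + 1/κ⁸ + 2/κ⁹ + 1/κ¹⁰ and g₃(κ) := 8 + 24/κ² + 60/κ³ + 41/κ⁴ + 10/κ⁵ + 21/κ⁶ + 12/κ⁷ + 1/κ⁸ + 2/κ⁹ + 1/κ¹⁰, and let f(x) := x³ - g₂(κ)·x² + (g₃(κ)/κ⁹)·x - g₃(κ)/κ¹⁵. Then for every x ≤ 4/(5κ⁶), f(x) < 0. -/
import Mathlib


noncomputable def g2 (κ : ℝ) : ℝ :=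
  1/κ^3 + 5/κ^5 + 11/κ^6 + 5/κ^7 + 1/κ^8 + 2/κ^9 + 1/κ^10

noncomputable def g3 (κ : ℝ) : ℝ :=
  8 + 24/κ^2 + 60/κ^3 + 41/κ^4 + 10/κ^5 + 21/κ^6 + 12/κ^7 + 1/κ^8 + 2/κ^9 + 1/κ^10

noncomputable def f (κ x : ℝ) : ℝ :=
  x^3 - g2 κ * x^2 + (g3 κ / κ^9) * x - g3 κ / κ^15

theorem stmt_3 (κ : ℝ) (hκ : 1 ≤ κ) (x : ℝ) (hx : x ≤ 4 / (5 * κ^6)) :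
    f κ x < 0 := by
  have hκ0 : (0:ℝ) < κ := by linarith
  have h6 : (0:ℝ) < κ^6 := pow_pos hκ0 6
  have h9 : (0:ℝ) < κ^9 := pow_pos hκ0 9
  have h15 : (0:ℝ) < κ^15 := pow_pos hκ0 15
  have hκne : κ ≠ 0 := ne_of_gt hκ0
  have hg2 : 0 ≤ g2 κ := by unfold g2; positivity
  have hg3 : 8 ≤ g3 κ := by
    have h : (0:ℝ) ≤ 24/κ^2 + 60/κ^3 + 41/κ^4 + 10/κ^5 + 21/κ^6 + 12/κ^7
        + 1/κ^8 + 2/κ^9 + 1/κ^10 := by positivity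
    unfold g3; linarith
  have hg3' : (0:ℝ) < g3 κ := by linarith
  have hgx2 : 0 ≤ g2 κ * x^2 := mul_nonneg hg2 (sq_nonneg x)
  rcases le_or_gt x 0 with hx0 | hx0
  · have h3 : x^3 ≤ 0 := by nlinarith [sq_nonneg x]
    have h4 : (g3 κ / κ^9) * x ≤ 0 :=
      mul_nonpos_of_nonneg_of_nonpos (div_nonneg hg3'.le h9.le) hx0
    have h5 : 0 < g3 κ / κ^15 := div_pos hg3' h15
    unfold f; linarith
  · -- 0 < x
    have hrw : f κ x = x^3 - g2 κ * x^2 + (g3 κ / κ^9) * (x - 1/κ^6) := by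
      unfold f; field_simp; ring
    have hxu : x - 1/κ^6 ≤ -(1/(5*κ^6)) := by
      have h4 : (4:ℝ)/(5*κ^6) = 1/κ^6 - 1/(5*κ^6) := by ring
      linarith [hx.trans_eq h4]
    have hstep1 : (g3 κ / κ^9) * (x - 1/κ^6) ≤ (8/κ^9) * (x - 1/κ^6) := by
      have hneg : x - 1/κ^6 ≤ 0 := by
        have : (0:ℝ) < 1/(5*κ^6) := by positivity
        linarith
      have h8 : (8:ℝ)/κ^9 ≤ g3 κ / κ^9 := by gcongr
      nlinarith
    have hstep2 : (8/κ^9) * (x - 1/κ^6) ≤ (8/κ^9) * (-(1/(5*κ^6))) := by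
      have h8p : (0:ℝ) ≤ 8/κ^9 := by positivity
      exact mul_le_mul_of_nonneg_left hxu h8p
    have hstep3 : (8/κ^9) * (-(1/(5*κ^6))) = -(8/(5*κ^15)) := by
      field_simp
    have hx3 : x^3 ≤ 64/(125*κ^18) := by
      have hxb : x ≤ 4/5 * (1/κ^6) := by
        have : (4:ℝ)/(5*κ^6) = 4/5 * (1/κ^6) := by ring
        linarith [hx.trans_eq this]
      have h1 : x^3 ≤ (4/5 * (1/κ^6))^3 :=
        pow_le_pow_left₀ hx0.le hxb 3
      calc x^3 ≤ (4/5 * (1/κ^6))^3 := h1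
        _ = 64/(125*κ^18) := by field_simp; ring
    have h1518 : 64/(125*κ^18) ≤ 64/(125*κ^15) := by
      have hp : κ^15 ≤ κ^18 := pow_le_pow_right₀ hκ (by norm_num)
      apply div_le_div_of_nonneg_left (by norm_num) (by positivity)
      nlinarith
    have hfinal : 64/(125*κ^15) - 8/(5*κ^15) < 0 := by
      have : 64/(125*κ^15) - 8/(5*κ^15) = -(136/(125*κ^15)) := by ring
      have hpos : (0:ℝ) < 136/(125*κ^15) := by positivity
      linarith
    rw [hrw]
    linarith
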